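/- Let $\delta$ be the Euclidean metric on $\mathbb{R}^6$, $\sigma = (1-r^2)/2$, $n = d\sigma$ (so $n_a = -x_a$), and $\varphi$ a constant (parallel) $2$-form. Then the $2$-form $iF_{ab} = (1+2\sigma)\varphi_{ab} - n_a\varphi_{nb} + n_b\varphi_{na}$ (where $\varphi_{nb} = n^c\varphi_{cb}$) is closed and satisfies $\sigma\nabla^a F_{ab} = 2 n^a F_{ab}$, i.e. $F$ solves the Maxwell (Yang–Mills for $U(1)$) equations with respect to the hyperbolic metric $g_+ = \delta/\sigma^2$ on the open unit ball. -/

import Mathlib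

/-
Everything is an explicit computation with `∂_c x_a = δ_{ac}`. Writing `(xφ)_b = x^c φ_{cb}`,
  `∂_c G_{ab} = -2 x_c φ_{ab} - δ_{ca} (xφ)_b - x_a φ_{cb} + δ_{cb} (xφ)_a + x_b φ_{ca}`,
whose cyclic sum over `a b c` cancels by antisymmetry of `φ`, so `G` is closed. Contracting
instead gives `∂^a G_{ab} = -(d + 2) (xφ)_b`, while `x^a G_{ab} = 4σ (xφ)_b` because the quadratic
form `x^a x^c φ_{ca}` of an antisymmetric `φ` vanishes. Hence
`σ ∂^a G_{ab} = ((d + 2)/4) n^a G_{ab}`, and the factor is `2` exactly when `d = 6`.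
-/

open scoped Matrix

section

variable {ι : Type*} [Fintype ι]

-- The paper's `iF_{ab}`, with `n = -x` and `1 + 2σ = 2 - |x|²`.
def hyperbolicMaxwellForm (φ : Matrix ι ι ℝ) (x : ι → ℝ) (a b : ι) : ℝ :=
  (2 - x ⬝ᵥ x) * φ a b - x a * (x ᵥ* φ) b + x b * (x ᵥ* φ) a

lemma dotProduct_vecMul_self_eq_zero {φ : Matrix ι ι ℝ} (hφ : ∀ a b, φ a b = -φ b a)
    (x : ι → ℝ) : x ⬝ᵥ (x ᵥ* φ) = 0 := by
  have hT : φᵀ = -φ := by ext a b; exact hφ b a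
  have h : x ⬝ᵥ (x ᵥ* φ) = -(x ⬝ᵥ (x ᵥ* φ)) := by
    conv_lhs => rw [← Matrix.transpose_transpose φ, hT, Matrix.vecMul_transpose,
      Matrix.dotProduct_mulVec, Matrix.vecMul_neg, neg_dotProduct, dotProduct_comm]
  linarith

lemma hasFDerivAt_vecMul_apply (φ : Matrix ι ι ℝ) (b : ι) (x : ι → ℝ) :
    HasFDerivAt (fun y => (y ᵥ* φ) b)
      ((ContinuousLinearMap.proj b).comp
        (LinearMap.toContinuousLinearMap (Matrix.vecMulLinear φ))) x :=
  ((ContinuousLinearMap.proj b).comp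
    (LinearMap.toContinuousLinearMap (Matrix.vecMulLinear φ))).hasFDerivAt

lemma hasFDerivAt_dotProduct_self (x : ι → ℝ) :
    HasFDerivAt (fun y => y ⬝ᵥ y)
      (∑ i, (x i • ContinuousLinearMap.proj i + x i • ContinuousLinearMap.proj i :
        (ι → ℝ) →L[ℝ] ℝ)) x :=
  HasFDerivAt.fun_sum fun i _ => ((hasFDerivAt_apply i x).mul (hasFDerivAt_apply i x))

lemma fderiv_hyperbolicMaxwellForm_apply (φ : Matrix ι ι ℝ) (x v : ι → ℝ) (a b : ι) :
    fderiv ℝ (fun y => hyperbolicMaxwellForm φ y a b) x v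
      = -2 * (x ⬝ᵥ v) * φ a b - v a * (x ᵥ* φ) b - x a * (v ᵥ* φ) b
        + v b * (x ᵥ* φ) a + x b * (v ᵥ* φ) a := by
  have H : HasFDerivAt (fun y => hyperbolicMaxwellForm φ y a b) _ x :=
    ((((hasFDerivAt_const (2 : ℝ) x).sub (hasFDerivAt_dotProduct_self x)).mul_const (φ a b)).sub
      ((hasFDerivAt_apply a x).mul (hasFDerivAt_vecMul_apply φ b x))).add
      ((hasFDerivAt_apply b x).mul (hasFDerivAt_vecMul_apply φ a x))
  rw [H.fderiv]
  simp only [add_apply, sub_apply, smul_apply, sum_apply, zero_apply,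
    ContinuousLinearMap.comp_apply, ContinuousLinearMap.proj_apply,
    LinearMap.coe_toContinuousLinearMap', Matrix.vecMulLinear_apply, dotProduct, smul_eq_mul,
    Finset.sum_add_distrib]
  ring

lemma sum_mul_hyperbolicMaxwellForm {φ : Matrix ι ι ℝ} (hφ : ∀ a b, φ a b = -φ b a)
    (x : ι → ℝ) (b : ι) :
    ∑ a, x a * hyperbolicMaxwellForm φ x a b = 2 * (1 - x ⬝ᵥ x) * (x ᵥ* φ) b := by
  have hterm : ∀ a, x a * hyperbolicMaxwellForm φ x a b = (2 - x ⬝ᵥ x) * (x a * φ a b)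
      - (x ᵥ* φ) b * (x a * x a) + x b * (x a * (x ᵥ* φ) a) := fun a => by
    rw [hyperbolicMaxwellForm]; ring
  rw [Finset.sum_congr rfl fun a _ => hterm a, Finset.sum_add_distrib, Finset.sum_sub_distrib,
    ← Finset.mul_sum, ← Finset.mul_sum, ← Finset.mul_sum]
  change (2 - x ⬝ᵥ x) * (x ᵥ* φ) b - (x ᵥ* φ) b * (x ⬝ᵥ x) + x b * (x ⬝ᵥ (x ᵥ* φ)) = _
  rw [dotProduct_vecMul_self_eq_zero hφ x]
  ring

variable [DecidableEq ι]

lemma fderiv_hyperbolicMaxwellForm_single (φ : Matrix ι ι ℝ) (x : ι → ℝ) (a b c : ι) :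
    fderiv ℝ (fun y => hyperbolicMaxwellForm φ y a b) x (Pi.single c 1)
      = -2 * x c * φ a b - (Pi.single c 1 : ι → ℝ) a * (x ᵥ* φ) b - x a * φ c b
        + (Pi.single c 1 : ι → ℝ) b * (x ᵥ* φ) a + x b * φ c a := by
  simp [fderiv_hyperbolicMaxwellForm_apply, dotProduct_single]

lemma hyperbolicMaxwellForm_closed {φ : Matrix ι ι ℝ} (hφ : ∀ a b, φ a b = -φ b a)
    (x : ι → ℝ) (a b c : ι) :
    fderiv ℝ (fun y => hyperbolicMaxwellForm φ y a b) x (Pi.single c 1)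
      + fderiv ℝ (fun y => hyperbolicMaxwellForm φ y b c) x (Pi.single a 1)
      + fderiv ℝ (fun y => hyperbolicMaxwellForm φ y c a) x (Pi.single b 1) = 0 := by
  have hδ : ∀ i j : ι, (Pi.single i 1 : ι → ℝ) j = (Pi.single j 1 : ι → ℝ) i := fun i j => by
    simp [Pi.single_apply, eq_comm]
  simp only [fderiv_hyperbolicMaxwellForm_single]
  rw [hδ c a, hδ a b, hδ b c, hφ c b, hφ a c, hφ b a]
  ring

lemma sum_fderiv_hyperbolicMaxwellForm_single {φ : Matrix ι ι ℝ} (hφ : ∀ a b, φ a b = -φ b a)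
    (x : ι → ℝ) (b : ι) :
    ∑ a, fderiv ℝ (fun y => hyperbolicMaxwellForm φ y a b) x (Pi.single a 1)
      = -(Fintype.card ι + 2) * (x ᵥ* φ) b := by
  have hφ0 : ∀ a, φ a a = 0 := fun a => by linarith [hφ a a]
  simp only [fderiv_hyperbolicMaxwellForm_single, hφ0, Pi.single_eq_same, Finset.sum_add_distrib, Finset.sum_sub_distrib, Pi.single_apply,
    ite_mul, one_mul, zero_mul, mul_zero, add_zero, Finset.sum_ite_eq, Finset.mem_univ, if_true,
    Finset.sum_const, Finset.card_univ, nsmul_eq_mul, mul_assoc, ← Finset.mul_sum, Matrix.vecMul,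
    dotProduct]
  ring

end

theorem statement13_maxwell_solution_hyperbolic_ball
    (φ : Fin 6 → Fin 6 → ℝ)
    (hφ : ∀ a b, φ a b = -φ b a)
    (σ : (Fin 6 → ℝ) → ℝ) (hσ : ∀ x, σ x = (1 - ∑ i, (x i) ^ 2) / 2)
    (n : (Fin 6 → ℝ) → Fin 6 → ℝ) (hn : ∀ x a, n x a = -x a)
    (G : (Fin 6 → ℝ) → Fin 6 → Fin 6 → ℝ)
    (hG : ∀ x a b, G x a b
      = (1 + 2 * σ x) * φ a b
        - n x a * (∑ c, n x c * φ c b)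
        + n x b * (∑ c, n x c * φ c a)) :
    ∀ x : Fin 6 → ℝ, (∑ i, (x i) ^ 2) < 1 →
      -- closedness: ∂_{[c}G_{ab]} = 0
      ((∀ a b c,
        fderiv ℝ (fun y => G y a b) x (Pi.single c 1)
          + fderiv ℝ (fun y => G y b c) x (Pi.single a 1)
          + fderiv ℝ (fun y => G y c a) x (Pi.single b 1) = 0)
      -- coclosedness w.r.t. g_+ = δ/σ²:  σ ∇^a F_{ab} = 2 n^a F_{ab}
      ∧ (∀ b,
        σ x * (∑ a, fderiv ℝ (fun y => G y a b) x (Pi.single a 1))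
          = 2 * ∑ a, n x a * G x a b)) := by
  intro x _
  have hσ' : ∀ y, σ y = (1 - y ⬝ᵥ y) / 2 := fun y => by simp [hσ, dotProduct, sq]
  have hG' : ∀ y a b, G y a b = hyperbolicMaxwellForm φ y a b := fun y a b => by
    simp only [hG, hσ', hn, hyperbolicMaxwellForm, Matrix.vecMul, dotProduct, neg_mul, mul_neg,
      Finset.sum_neg_distrib]
    ring
  refine ⟨fun a b c => ?_, fun b => ?_⟩
  · simpa only [hG'] using hyperbolicMaxwellForm_closed hφ x a b c
  · simp only [sum_fderiv_hyperbolicMaxwellForm_single hφ, hn, hG', neg_mul,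
      Finset.sum_neg_distrib, sum_mul_hyperbolicMaxwellForm hφ, hσ', Fintype.card_fin]
    ring
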